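/- arXiv:2603.08554 — 4 statements merged into one kernel-verified Lean document; each statement's English description precedes it below -/
import Mathlib

section
/- Let φ₁, φ₂ be linearly independent vectors in a complex inner product space, α₀ ≠ 0 real, d = √((‖φ₁‖² - ‖φ₂‖²)² + 4|⟨φ₁,φ₂⟩|²), and λⱼ' = (‖φ₁‖² + ‖φ₂‖² + (-1)^{j+1} d) / (2α₀²(‖φ₁‖²‖φ₂‖² - |⟨φ₁,φ₂⟩|²)) for j = 1,2. Then λ₁' ≥ 1/(α₀²‖φⱼ‖²) and λ₂' ≤ 1/(α₀²‖φⱼ‖²) for j = 1,2. -/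
/-!
The numbers `a = ‖φ₁‖²`, `b = ‖φ₂‖²`, `c = |⟨φ₁, φ₂⟩|²` describe the Gram matrix of `φ₁, φ₂`,
whose eigenvalues are `μ± = (a + b ± d) / 2`, with `μ₊ μ₋ = a b - c > 0` by the strict
Cauchy–Schwarz inequality. Hence `λ₁' = 1 / (α₀² μ₋)` and `λ₂' = 1 / (α₀² μ₊)`, and the bounds
are the interlacing `μ₋ ≤ a, b ≤ μ₊` of the eigenvalues with the diagonal entries, inverted.
-/

open Set

theorem sq_norm_inner_lt_of_linearIndependent {𝕜 E : Type*} [RCLike 𝕜] [NormedAddCommGroup E]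
    [InnerProductSpace 𝕜 E] {x y : E} (h : LinearIndependent 𝕜 ![x, y]) :
    ‖(inner 𝕜 x y : 𝕜)‖ ^ 2 < ‖x‖ ^ 2 * ‖y‖ ^ 2 := by
  have hx : x ≠ 0 := by simpa using h.ne_zero 0
  have hlt : ‖(inner 𝕜 x y : 𝕜)‖ < ‖x‖ * ‖y‖ := by
    refine (norm_inner_le_norm x y).lt_of_ne fun heq => ?_
    rcases ((norm_inner_eq_norm_tfae 𝕜 x y).out 0 2).1 heq with hx' | ⟨r, rfl⟩
    · exact hx hx'
    · exact (LinearIndependent.pair_iff' hx).1 h r rfl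
  rw [← mul_pow]
  exact pow_lt_pow_left₀ hlt (norm_nonneg _) two_ne_zero

section GramEigenvalues

variable {a b c d x : ℝ}

theorem inv_mem_Icc_of_mem_eigenvalue_Icc (hd : d ^ 2 = (a - b) ^ 2 + 4 * c)
    (hΔ : 0 < a * b - c) (hx : 0 < x) (hmem : x ∈ Icc ((a + b - d) / 2) ((a + b + d) / 2)) :
    x⁻¹ ∈ Icc ((a + b - d) / (2 * (a * b - c))) ((a + b + d) / (2 * (a * b - c))) := by
  have hvieta : 2 * (a * b - c) = (a + b + d) * ((a + b - d) / 2) := by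
    linear_combination hd / 2
  have hvieta' : 2 * (a * b - c) = (a + b - d) * ((a + b + d) / 2) := by
    linear_combination hd / 2
  have hplus : 0 < a + b + d := by linarith [hmem.1, hmem.2]
  have hminus : 0 < (a + b - d) / 2 :=
    pos_of_mul_pos_right (hvieta ▸ by positivity) hplus.le
  constructor
  · rw [hvieta', div_mul_cancel_left₀ (by linarith)]
    exact inv_anti₀ hx hmem.2
  · rw [hvieta, div_mul_cancel_left₀ hplus.ne']
    exact inv_anti₀ hminus hmem.1

theorem one_div_mul_mem_Icc_of_mem_eigenvalue_Icc {t : ℝ} (ht : 0 ≤ t)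
    (hd : d ^ 2 = (a - b) ^ 2 + 4 * c) (hΔ : 0 < a * b - c) (hx : 0 < x)
    (hmem : x ∈ Icc ((a + b - d) / 2) ((a + b + d) / 2)) :
    1 / (t * x) ∈
      Icc ((a + b - d) / (2 * t * (a * b - c))) ((a + b + d) / (2 * t * (a * b - c))) := by
  obtain ⟨h₁, h₂⟩ := inv_mem_Icc_of_mem_eigenvalue_Icc hd hΔ hx hmem
  have hscale : ∀ y : ℝ, y / (2 * t * (a * b - c)) = t⁻¹ * (y / (2 * (a * b - c))) :=
    fun _ => by rw [mul_right_comm, div_mul_eq_div_div, div_eq_inv_mul]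
  rw [hscale, hscale, one_div, mul_inv]
  exact ⟨mul_le_mul_of_nonneg_left h₁ (inv_nonneg.2 ht),
    mul_le_mul_of_nonneg_left h₂ (inv_nonneg.2 ht)⟩

end GramEigenvalues

theorem resonance_path_derivative_bounds_general
    {E : Type*} [NormedAddCommGroup E] [InnerProductSpace ℂ E]
    (φ₁ φ₂ : E) (hli : LinearIndependent ℂ ![φ₁, φ₂])
    (α₀ : ℝ)
    (d : ℝ)
    (hd : d = Real.sqrt ((‖φ₁‖ ^ 2 - ‖φ₂‖ ^ 2) ^ 2 + 4 * ‖(inner ℂ φ₁ φ₂ : ℂ)‖ ^ 2))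
    (l₁' l₂' : ℝ)
    (hl₁ : l₁' = (‖φ₁‖ ^ 2 + ‖φ₂‖ ^ 2 + d) /
        (2 * α₀ ^ 2 * (‖φ₁‖ ^ 2 * ‖φ₂‖ ^ 2 - ‖(inner ℂ φ₁ φ₂ : ℂ)‖ ^ 2)))
    (hl₂ : l₂' = (‖φ₁‖ ^ 2 + ‖φ₂‖ ^ 2 - d) /
        (2 * α₀ ^ 2 * (‖φ₁‖ ^ 2 * ‖φ₂‖ ^ 2 - ‖(inner ℂ φ₁ φ₂ : ℂ)‖ ^ 2))) :
    (l₁' ≥ 1 / (α₀ ^ 2 * ‖φ₁‖ ^ 2) ∧ l₁' ≥ 1 / (α₀ ^ 2 * ‖φ₂‖ ^ 2)) ∧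
    (l₂' ≤ 1 / (α₀ ^ 2 * ‖φ₁‖ ^ 2) ∧ l₂' ≤ 1 / (α₀ ^ 2 * ‖φ₂‖ ^ 2)) := by
  have ha : 0 < ‖φ₁‖ ^ 2 := pow_pos (norm_pos_iff.2 (by simpa using hli.ne_zero 0)) 2
  have hb : 0 < ‖φ₂‖ ^ 2 := pow_pos (norm_pos_iff.2 (by simpa using hli.ne_zero 1)) 2
  have hΔ := sub_pos.2 (sq_norm_inner_lt_of_linearIndependent hli)
  have hd0 : 0 ≤ d := hd ▸ Real.sqrt_nonneg _
  have hdsq : d ^ 2 = (‖φ₁‖ ^ 2 - ‖φ₂‖ ^ 2) ^ 2 + 4 * ‖(inner ℂ φ₁ φ₂ : ℂ)‖ ^ 2 :=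
    hd ▸ Real.sq_sqrt (by positivity)
  obtain ⟨hba, hab⟩ := abs_le.1 <| abs_le_of_sq_le_sq (a := ‖φ₁‖ ^ 2 - ‖φ₂‖ ^ 2)
    (hdsq ▸ le_add_of_nonneg_right (by positivity)) hd0
  have h₁ := one_div_mul_mem_Icc_of_mem_eigenvalue_Icc (sq_nonneg α₀) hdsq hΔ ha
    ⟨by linarith, by linarith⟩
  have h₂ := one_div_mul_mem_Icc_of_mem_eigenvalue_Icc (sq_nonneg α₀) hdsq hΔ hb
    ⟨by linarith, by linarith⟩
  subst hl₁ hl₂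
  exact ⟨⟨h₁.2, h₂.2⟩, h₁.1, h₂.1⟩

theorem resonance_path_derivative_bounds
    {E : Type*} [NormedAddCommGroup E] [InnerProductSpace ℂ E]
    (φ₁ φ₂ : E) (hli : LinearIndependent ℂ ![φ₁, φ₂])
    (α₀ : ℝ) (hα₀ : α₀ ≠ 0)
    (d : ℝ)
    (hd : d = Real.sqrt ((‖φ₁‖ ^ 2 - ‖φ₂‖ ^ 2) ^ 2 + 4 * ‖(inner ℂ φ₁ φ₂ : ℂ)‖ ^ 2))
    (l₁' l₂' : ℝ)
    (hl₁ : l₁' = (‖φ₁‖ ^ 2 + ‖φ₂‖ ^ 2 + d) /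
        (2 * α₀ ^ 2 * (‖φ₁‖ ^ 2 * ‖φ₂‖ ^ 2 - ‖(inner ℂ φ₁ φ₂ : ℂ)‖ ^ 2)))
    (hl₂ : l₂' = (‖φ₁‖ ^ 2 + ‖φ₂‖ ^ 2 - d) /
        (2 * α₀ ^ 2 * (‖φ₁‖ ^ 2 * ‖φ₂‖ ^ 2 - ‖(inner ℂ φ₁ φ₂ : ℂ)‖ ^ 2))) :
    (l₁' ≥ 1 / (α₀ ^ 2 * ‖φ₁‖ ^ 2) ∧ l₁' ≥ 1 / (α₀ ^ 2 * ‖φ₂‖ ^ 2)) ∧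
    (l₂' ≤ 1 / (α₀ ^ 2 * ‖φ₁‖ ^ 2) ∧ l₂' ≤ 1 / (α₀ ^ 2 * ‖φ₂‖ ^ 2)) :=
  resonance_path_derivative_bounds_general φ₁ φ₂ hli α₀ d hd l₁' l₂' hl₁ hl₂
end

section
/- With the notation of the previous statement (φ₁, φ₂ linearly independent, α₀ ≠ 0, d and λ₁', λ₂' as defined), the following are equivalent: (i) λ₁' = 1/(α₀²‖φ₁‖²) and λ₂' = 1/(α₀²‖φ₂‖²); (ii) ⟨φ₁,φ₂⟩ = 0. -/
/-!
Write `x = ‖φ₁‖²`, `y = ‖φ₂‖²`, `z = |⟨φ₁, φ₂⟩|²` and `t = α₀²`. Whatever `d` is, the two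
candidate values add up to `(x + y) / (t (x y - z))`, while `1 / (t x) + 1 / (t y)` is
`(x + y) / (t x y)`; so the two equalities force `z = 0`. Conversely, if `z = 0` then
`d = |x - y| = y - x`, and the two quotients reduce to `1 / (t x)` and `1 / (t y)`.
-/

section

variable {x y z t d : ℝ}

theorem eq_zero_of_div_eq_inv_of_div_eq_inv (hx : x ≠ 0) (hy : y ≠ 0) (hx_add_y : x + y ≠ 0)
    (ht : t ≠ 0) (h₁ : (x + y + d) / (2 * t * (x * y - z)) = 1 / (t * x))
    (h₂ : (x + y - d) / (2 * t * (x * y - z)) = 1 / (t * y)) :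
    z = 0 := by
  have hsum : 2 * (x + y) / (2 * t * (x * y - z)) = 2 * (x + y) / (2 * t * (x * y)) :=
    calc 2 * (x + y) / (2 * t * (x * y - z))
        = (x + y + d) / (2 * t * (x * y - z)) + (x + y - d) / (2 * t * (x * y - z)) := by
          rw [← add_div]; ring_nf
      _ = 1 / (t * x) + 1 / (t * y) := by rw [h₁, h₂]
      _ = 2 * (x + y) / (2 * t * (x * y)) := by field_simp; ring
  rw [div_eq_mul_inv, div_eq_mul_inv] at hsum
  have hden := inv_inj.1 (mul_left_cancel₀ (mul_ne_zero two_ne_zero hx_add_y) hsum)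
  have hxyz := mul_left_cancel₀ (mul_ne_zero two_ne_zero ht) hden
  linarith

theorem div_eq_inv_and_div_eq_inv_of_eq_zero (hx : x ≠ 0) (hy : y ≠ 0) (hxy : x ≤ y) :
    (x + y + √((x - y) ^ 2 + 4 * 0)) / (2 * t * (x * y - 0)) = 1 / (t * x) ∧
      (x + y - √((x - y) ^ 2 + 4 * 0)) / (2 * t * (x * y - 0)) = 1 / (t * y) := by
  rw [mul_zero, add_zero, ← neg_sub, neg_sq, Real.sqrt_sq (sub_nonneg.2 hxy)]
  constructor <;> field_simp <;> ring

end

theorem resonance_path_derivative_eq_iff_orthogonal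
    {E : Type*} [NormedAddCommGroup E] [InnerProductSpace ℂ E]
    (φ₁ φ₂ : E) (hli : LinearIndependent ℂ ![φ₁, φ₂])
    (hle : ‖φ₁‖ ≤ ‖φ₂‖)
    (α₀ : ℝ) (hα₀ : α₀ ≠ 0)
    (d : ℝ)
    (hd : d = Real.sqrt ((‖φ₁‖ ^ 2 - ‖φ₂‖ ^ 2) ^ 2 + 4 * ‖(inner ℂ φ₁ φ₂ : ℂ)‖ ^ 2))
    (l₁' l₂' : ℝ)
    (hl₁ : l₁' = (‖φ₁‖ ^ 2 + ‖φ₂‖ ^ 2 + d) /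
        (2 * α₀ ^ 2 * (‖φ₁‖ ^ 2 * ‖φ₂‖ ^ 2 - ‖(inner ℂ φ₁ φ₂ : ℂ)‖ ^ 2)))
    (hl₂ : l₂' = (‖φ₁‖ ^ 2 + ‖φ₂‖ ^ 2 - d) /
        (2 * α₀ ^ 2 * (‖φ₁‖ ^ 2 * ‖φ₂‖ ^ 2 - ‖(inner ℂ φ₁ φ₂ : ℂ)‖ ^ 2))) :
    (l₁' = 1 / (α₀ ^ 2 * ‖φ₁‖ ^ 2) ∧ l₂' = 1 / (α₀ ^ 2 * ‖φ₂‖ ^ 2)) ↔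
      (inner ℂ φ₁ φ₂ : ℂ) = 0 := by
  have hx : 0 < ‖φ₁‖ ^ 2 := pow_pos (norm_pos_iff.2 (by simpa using hli.ne_zero 0)) 2
  have hy : 0 < ‖φ₂‖ ^ 2 := pow_pos (norm_pos_iff.2 (by simpa using hli.ne_zero 1)) 2
  subst hl₁ hl₂
  constructor
  · rintro ⟨h₁, h₂⟩
    have hz := eq_zero_of_div_eq_inv_of_div_eq_inv hx.ne' hy.ne' (by positivity)
      (pow_ne_zero 2 hα₀) h₁ h₂
    simpa using hz
  · intro h
    rw [hd, h, norm_zero, zero_pow two_ne_zero]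
    exact div_eq_inv_and_div_eq_inv_of_eq_zero hx.ne' hy.ne' (by gcongr)
end

section
/- Let φ₁, φ₂ be linearly independent vectors in a complex inner product space with ‖φ₁‖ ≤ ‖φ₂‖ and ⟨φ₁,φ₂⟩ ≠ 0 or ‖φ₁‖ ≠ ‖φ₂‖, and let α₀ ≠ 0, d, λ₁', λ₂' be as above. Define a₁₁ = √((-1 + α₀²‖φ₂‖²λ₁')/d), a₁₂ = -q(⟨φ₁,φ₂⟩)√((-1 + α₀²‖φ₁‖²λ₁')/d), a₂₁ = √((1 - α₀²‖φ₂‖²λ₂')/d), a₂₂ = q(⟨φ₁,φ₂⟩)√((1 - α₀²‖φ₁‖²λ₂')/d), where q(z) = z/|z| for z ≠ 0 and q(0) = 1. Then for j = 1,2, aⱼ₁·aⱼ₂ = ((-1)^j / d)·α₀²·⟨φ₁,φ₂⟩·λⱼ'. -/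
/-!
Write `P = ‖φ₁‖²`, `Q = ‖φ₂‖²`, `s = |⟨φ₁, φ₂⟩|` and `μ = α₀² λ'`. Since `d² = (P + Q)² - 4(PQ - s²)`,
the two numbers `μ = (P + Q ± d) / (2(PQ - s²))` are the roots of `(PQ - s²) μ² - (P + Q) μ + 1 = 0`,
which is the identity `(Qμ - 1)(Pμ - 1) = s² μ²`. Both roots are positive (strict Cauchy–Schwarz
gives `PQ - s² > 0`), and the two factors have sum `± d μ`, so they have the sign needed for the
radicands in `aⱼ₁` and `aⱼ₂` to be nonnegative; hence `aⱼ₁ aⱼ₂ = ∓ q s μ / d`. Finally `q s = ⟨φ₁, φ₂⟩`,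
also when the inner product vanishes.
-/

theorem norm_inner_lt_norm_mul_norm_of_linearIndependent {𝕜 E : Type*} [RCLike 𝕜]
    [NormedAddCommGroup E] [InnerProductSpace 𝕜 E] {x y : E}
    (h : LinearIndependent 𝕜 ![x, y]) : ‖(inner 𝕜 x y : 𝕜)‖ < ‖x‖ * ‖y‖ := by
  obtain ⟨hy, hxy⟩ := linearIndependent_fin2.mp h
  refine (norm_inner_le_norm x y).lt_of_ne fun heq => ?_
  rw [norm_inner_symm, mul_comm] at heq
  obtain hy0 | ⟨r, hr⟩ := ((norm_inner_eq_norm_tfae 𝕜 y x).out 0 2).mp heq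
  exacts [hy hy0, hxy r hr.symm]

theorem Real.sqrt_div_mul_sqrt_div_of_mul_eq_sq {x y r d : ℝ} (hd : 0 ≤ d) (hr : 0 ≤ r)
    (hxy : x * y = r ^ 2) (hsum : 0 ≤ x + y) : √(x / d) * √(y / d) = r / d := by
  have hx : 0 ≤ x := by nlinarith [sq_nonneg r]
  rw [← Real.sqrt_mul (div_nonneg hx hd), div_mul_div_comm, hxy, ← sq, ← div_pow,
    Real.sqrt_sq (div_nonneg hr hd)]

theorem Complex.ite_div_norm_mul_norm (z : ℂ) :
    (if z = 0 then 1 else z / ‖z‖) * (‖z‖ : ℂ) = z := by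
  split_ifs with hz
  · simp [hz]
  · exact div_mul_cancel₀ z (by simpa using hz)

section Eigenvalue

variable {P Q s e d α l : ℝ}

theorem eigenvalue_mul_sub_eq_two (hα : α ≠ 0) (hK : s ^ 2 < P * Q)
    (he : e ^ 2 = (P - Q) ^ 2 + 4 * s ^ 2)
    (hl : l = (P + Q + e) / (2 * α ^ 2 * (P * Q - s ^ 2))) :
    α ^ 2 * l * (P + Q - e) = 2 := by
  have hK' : P * Q - s ^ 2 ≠ 0 := (sub_pos.mpr hK).ne'
  rw [hl]
  field_simp
  linear_combination -he

theorem eigenvalue_factors_mul (hα : α ≠ 0) (hK : s ^ 2 < P * Q)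
    (he : e ^ 2 = (P - Q) ^ 2 + 4 * s ^ 2)
    (hl : l = (P + Q + e) / (2 * α ^ 2 * (P * Q - s ^ 2))) :
    (-1 + α ^ 2 * Q * l) * (-1 + α ^ 2 * P * l) = (α ^ 2 * s * l) ^ 2 := by
  have h2 := eigenvalue_mul_sub_eq_two hα hK he hl
  have hlK : l * (2 * α ^ 2 * (P * Q - s ^ 2)) = P + Q + e := by
    rw [hl, div_mul_cancel₀]
    have : P * Q - s ^ 2 ≠ 0 := (sub_pos.mpr hK).ne'
    positivity
  linear_combination (α ^ 2 * l / 2) * hlK - h2 / 2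

theorem eigenvalue_factors_add (hα : α ≠ 0) (hK : s ^ 2 < P * Q)
    (he : e ^ 2 = (P - Q) ^ 2 + 4 * s ^ 2)
    (hl : l = (P + Q + e) / (2 * α ^ 2 * (P * Q - s ^ 2))) :
    (-1 + α ^ 2 * Q * l) + (-1 + α ^ 2 * P * l) = e * (α ^ 2 * l) := by
  linear_combination eigenvalue_mul_sub_eq_two hα hK he hl

theorem eigenvalue_pos (hα : α ≠ 0) (hP : 0 ≤ P) (hQ : 0 ≤ Q) (hK : s ^ 2 < P * Q)
    (he : e ^ 2 = (P - Q) ^ 2 + 4 * s ^ 2)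
    (hl : l = (P + Q + e) / (2 * α ^ 2 * (P * Q - s ^ 2))) :
    0 < l := by
  have h := eigenvalue_factors_mul hα hK he hl
  have hα2 : 0 < α ^ 2 := by positivity
  by_contra! hl0
  nlinarith [mul_nonneg (mul_nonneg hα2.le hQ) (neg_nonneg.mpr hl0),
    mul_nonneg (mul_nonneg hα2.le hP) (neg_nonneg.mpr hl0),
    mul_nonneg (sub_pos.mpr hK).le (sq_nonneg (α ^ 2 * l))]

theorem sqrt_mul_sqrt_of_eigenvalue_add (hα : α ≠ 0) (hP : 0 ≤ P) (hQ : 0 ≤ Q) (hs : 0 ≤ s)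
    (hK : s ^ 2 < P * Q) (hd : 0 ≤ d) (hd2 : d ^ 2 = (P - Q) ^ 2 + 4 * s ^ 2)
    (hl : l = (P + Q + d) / (2 * α ^ 2 * (P * Q - s ^ 2))) :
    √((-1 + α ^ 2 * Q * l) / d) * √((-1 + α ^ 2 * P * l) / d) = α ^ 2 * s * l / d := by
  have hl0 := eigenvalue_pos hα hP hQ hK hd2 hl
  refine Real.sqrt_div_mul_sqrt_div_of_mul_eq_sq hd (by positivity)
    (eigenvalue_factors_mul hα hK hd2 hl) ?_
  rw [eigenvalue_factors_add hα hK hd2 hl]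
  positivity

theorem sqrt_mul_sqrt_of_eigenvalue_sub (hα : α ≠ 0) (hP : 0 ≤ P) (hQ : 0 ≤ Q) (hs : 0 ≤ s)
    (hK : s ^ 2 < P * Q) (hd : 0 ≤ d) (hd2 : d ^ 2 = (P - Q) ^ 2 + 4 * s ^ 2)
    (hl : l = (P + Q - d) / (2 * α ^ 2 * (P * Q - s ^ 2))) :
    √((1 - α ^ 2 * Q * l) / d) * √((1 - α ^ 2 * P * l) / d) = α ^ 2 * s * l / d := by
  rw [← neg_sq] at hd2
  rw [sub_eq_add_neg (P + Q)] at hl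
  have hl0 := eigenvalue_pos hα hP hQ hK hd2 hl
  refine Real.sqrt_div_mul_sqrt_div_of_mul_eq_sq hd (by positivity) ?_ ?_
  · linear_combination eigenvalue_factors_mul hα hK hd2 hl
  · have hsum := eigenvalue_factors_add hα hK hd2 hl
    have : 0 ≤ d * (α ^ 2 * l) := by positivity
    linarith

end Eigenvalue

theorem eigenbasis_coefficients_product_general
    {E : Type*} [NormedAddCommGroup E] [InnerProductSpace ℂ E]
    (φ₁ φ₂ : E) (hli : LinearIndependent ℂ ![φ₁, φ₂])
    (α₀ : ℝ) (hα₀ : α₀ ≠ 0)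
    (d : ℝ)
    (hd : d = Real.sqrt ((‖φ₁‖ ^ 2 - ‖φ₂‖ ^ 2) ^ 2 + 4 * ‖(inner ℂ φ₁ φ₂ : ℂ)‖ ^ 2))
    (l₁' l₂' : ℝ)
    (hl₁ : l₁' = (‖φ₁‖ ^ 2 + ‖φ₂‖ ^ 2 + d) /
        (2 * α₀ ^ 2 * (‖φ₁‖ ^ 2 * ‖φ₂‖ ^ 2 - ‖(inner ℂ φ₁ φ₂ : ℂ)‖ ^ 2)))
    (hl₂ : l₂' = (‖φ₁‖ ^ 2 + ‖φ₂‖ ^ 2 - d) /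
        (2 * α₀ ^ 2 * (‖φ₁‖ ^ 2 * ‖φ₂‖ ^ 2 - ‖(inner ℂ φ₁ φ₂ : ℂ)‖ ^ 2)))
    (q : ℂ)
    (hq : q = if (inner ℂ φ₁ φ₂ : ℂ) = 0 then 1
      else (inner ℂ φ₁ φ₂ : ℂ) / ‖(inner ℂ φ₁ φ₂ : ℂ)‖)
    (a₁₁ a₁₂ a₂₁ a₂₂ : ℂ)
    (ha₁₁ : a₁₁ = (Real.sqrt ((-1 + α₀ ^ 2 * ‖φ₂‖ ^ 2 * l₁') / d) : ℝ))
    (ha₁₂ : a₁₂ = -q * (Real.sqrt ((-1 + α₀ ^ 2 * ‖φ₁‖ ^ 2 * l₁') / d) : ℝ))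
    (ha₂₁ : a₂₁ = (Real.sqrt ((1 - α₀ ^ 2 * ‖φ₂‖ ^ 2 * l₂') / d) : ℝ))
    (ha₂₂ : a₂₂ = q * (Real.sqrt ((1 - α₀ ^ 2 * ‖φ₁‖ ^ 2 * l₂') / d) : ℝ)) :
    a₁₁ * a₁₂ = ((-1 : ℂ) / (d : ℝ)) * (α₀ : ℝ) ^ 2 * (inner ℂ φ₁ φ₂ : ℂ) * (l₁' : ℝ) ∧
    a₂₁ * a₂₂ = ((1 : ℂ) / (d : ℝ)) * (α₀ : ℝ) ^ 2 * (inner ℂ φ₁ φ₂ : ℂ) * (l₂' : ℝ) := by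
  set z : ℂ := inner ℂ φ₁ φ₂
  have hK : ‖z‖ ^ 2 < ‖φ₁‖ ^ 2 * ‖φ₂‖ ^ 2 := by
    rw [← mul_pow]
    exact pow_lt_pow_left₀ (norm_inner_lt_norm_mul_norm_of_linearIndependent hli)
      (norm_nonneg _) two_ne_zero
  have hd0 : 0 ≤ d := hd ▸ Real.sqrt_nonneg _
  have hd2 : d ^ 2 = (‖φ₁‖ ^ 2 - ‖φ₂‖ ^ 2) ^ 2 + 4 * ‖z‖ ^ 2 := hd ▸ Real.sq_sqrt (by positivity)
  have hqz : q * ‖z‖ = z := hq ▸ Complex.ite_div_norm_mul_norm z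
  have h₁ := congrArg ((↑) : ℝ → ℂ) <| sqrt_mul_sqrt_of_eigenvalue_add hα₀ (by positivity)
    (by positivity) (norm_nonneg z) hK hd0 hd2 hl₁
  have h₂ := congrArg ((↑) : ℝ → ℂ) <| sqrt_mul_sqrt_of_eigenvalue_sub hα₀ (by positivity)
    (by positivity) (norm_nonneg z) hK hd0 hd2 hl₂
  push_cast at h₁ h₂
  rw [ha₁₁, ha₁₂, ha₂₁, ha₂₂]
  constructor
  · linear_combination -q * h₁ - (α₀ ^ 2 * l₁' / d : ℂ) * hqz
  · linear_combination q * h₂ + (α₀ ^ 2 * l₂' / d : ℂ) * hqz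

theorem eigenbasis_coefficients_product
    {E : Type*} [NormedAddCommGroup E] [InnerProductSpace ℂ E]
    (φ₁ φ₂ : E) (hli : LinearIndependent ℂ ![φ₁, φ₂])
    (hnd : (inner ℂ φ₁ φ₂ : ℂ) ≠ 0 ∨ ‖φ₁‖ ≠ ‖φ₂‖)
    (α₀ : ℝ) (hα₀ : α₀ ≠ 0)
    (d : ℝ)
    (hd : d = Real.sqrt ((‖φ₁‖ ^ 2 - ‖φ₂‖ ^ 2) ^ 2 + 4 * ‖(inner ℂ φ₁ φ₂ : ℂ)‖ ^ 2))
    (l₁' l₂' : ℝ)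
    (hl₁ : l₁' = (‖φ₁‖ ^ 2 + ‖φ₂‖ ^ 2 + d) /
        (2 * α₀ ^ 2 * (‖φ₁‖ ^ 2 * ‖φ₂‖ ^ 2 - ‖(inner ℂ φ₁ φ₂ : ℂ)‖ ^ 2)))
    (hl₂ : l₂' = (‖φ₁‖ ^ 2 + ‖φ₂‖ ^ 2 - d) /
        (2 * α₀ ^ 2 * (‖φ₁‖ ^ 2 * ‖φ₂‖ ^ 2 - ‖(inner ℂ φ₁ φ₂ : ℂ)‖ ^ 2)))
    (hle : ‖φ₁‖ ≤ ‖φ₂‖)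
    (q : ℂ)
    (hq : q = if (inner ℂ φ₁ φ₂ : ℂ) = 0 then 1
      else (inner ℂ φ₁ φ₂ : ℂ) / ‖(inner ℂ φ₁ φ₂ : ℂ)‖)
    (a₁₁ a₁₂ a₂₁ a₂₂ : ℂ)
    (ha₁₁ : a₁₁ = (Real.sqrt ((-1 + α₀ ^ 2 * ‖φ₂‖ ^ 2 * l₁') / d) : ℝ))
    (ha₁₂ : a₁₂ = -q * (Real.sqrt ((-1 + α₀ ^ 2 * ‖φ₁‖ ^ 2 * l₁') / d) : ℝ))
    (ha₂₁ : a₂₁ = (Real.sqrt ((1 - α₀ ^ 2 * ‖φ₂‖ ^ 2 * l₂') / d) : ℝ))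
    (ha₂₂ : a₂₂ = q * (Real.sqrt ((1 - α₀ ^ 2 * ‖φ₁‖ ^ 2 * l₂') / d) : ℝ)) :
    a₁₁ * a₁₂ = ((-1 : ℂ) / (d : ℝ)) * (α₀ : ℝ) ^ 2 * (inner ℂ φ₁ φ₂ : ℂ) * (l₁' : ℝ) ∧
    a₂₁ * a₂₂ = ((1 : ℂ) / (d : ℝ)) * (α₀ : ℝ) ^ 2 * (inner ℂ φ₁ φ₂ : ℂ) * (l₂' : ℝ) :=
  eigenbasis_coefficients_product_general φ₁ φ₂ hli α₀ hα₀ d hd l₁' l₂' hl₁ hl₂ q hq a₁₁ a₁₂ a₂₁ a₂₂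
    ha₁₁ ha₁₂ ha₂₁ ha₂₂
end

section
/- Let τ : H → ℂ² be the bounded linear map τv = (⟨v,u₁⟩, ⟨v,u₂⟩) associated to orthonormal-free vectors u₁ ⊥ u₂ in a Hilbert space H. Then τ*τ = V where V = ⟨·,u₁⟩u₁ + ⟨·,u₂⟩u₂, and for any self-adjoint operator H₀ on H, any α ∈ ℝ and Im z ≠ 0, the operator B(α,z) = I + α·τ(H₀ - z)⁻¹τ* on ℂ² is invertible with inverse B(α,z)⁻¹ = I - α·τ(H₀ + αV - z)⁻¹τ*. -/
/-!
Pairing with a test vector gives `⟪w, τ*τ v⟫ = ⟪τ w, τ v⟫ = ∑ ⟪w, uᵢ⟫⟪uᵢ, v⟫`, hence `τ*τ = V`.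
Both `H₀` and `H₀ + αV` are self-adjoint, so they are invertible at non-real `z`, and the second
resolvent identity in its two forms, `R₀ - R_α = α R₀ τ*τ R_α = α R_α τ*τ R₀`, shows that
`X = α τ R₀ τ*` and `Y = α τ R_α τ*` satisfy `X - Y = X Y = Y X`. This is exactly
`(1 + X)(1 - Y) = 1 = (1 - Y)(1 + X)`.
-/

theorem one_add_mul_one_sub_eq_one {R : Type*} [Ring R] {a b : R} (h : a - b = a * b) :
    (1 + a) * (1 - b) = 1 := by
  calc (1 + a) * (1 - b) = 1 + (a - b - a * b) := by noncomm_ring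
    _ = 1 := by rw [h, sub_self, add_zero]

theorem one_sub_mul_one_add_eq_one {R : Type*} [Ring R] {a b : R} (h : a - b = b * a) :
    (1 - b) * (1 + a) = 1 := by
  calc (1 - b) * (1 + a) = 1 + (a - b - b * a) := by noncomm_ring
    _ = 1 := by rw [h, sub_self, add_zero]

theorem Ring.inverse_sub_inverse' {R : Type*} [Ring R] {a b : R} (h : IsUnit a ↔ IsUnit b) :
    Ring.inverse a - Ring.inverse b = Ring.inverse b * (b - a) * Ring.inverse a := by
  rw [← neg_sub, Ring.inverse_sub_inverse h.symm, ← neg_sub a, mul_neg, neg_mul]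

theorem IsSelfAdjoint.isUnit_sub_smul_one {A : Type*} [CStarAlgebra A] {a : A}
    (ha : IsSelfAdjoint a) {z : ℂ} (hz : z.im ≠ 0) : IsUnit (a - z • 1) := by
  have hz' : z ∉ spectrum ℂ a := fun hmem => hz (ha.im_eq_zero_of_mem_spectrum hmem)
  simpa [Algebra.algebraMap_eq_smul_one, neg_sub] using (spectrum.notMem_iff.mp hz').neg

namespace ContinuousLinearMap

section Sandwich

variable {𝕜 E F : Type*} [NontriviallyNormedField 𝕜] [NormedAddCommGroup E] [NormedSpace 𝕜 E]
  [NormedAddCommGroup F] [NormedSpace 𝕜 F] (τ : E →L[𝕜] F) (σ : F →L[𝕜] E) (c : 𝕜)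

theorem smul_comp_comp_sub_eq_mul {R₀ R₁ S S' : E →L[𝕜] E}
    (h : R₀ - R₁ = S * (c • σ ∘L τ) * S') :
    c • (τ ∘L R₀ ∘L σ) - c • (τ ∘L R₁ ∘L σ) = c • (τ ∘L S ∘L σ) * c • (τ ∘L S' ∘L σ) := by
  rw [← smul_sub, ← comp_sub, ← sub_comp, h]
  ext v
  simp only [mul_def, smul_apply, comp_apply, map_smul, smul_smul]

variable {T : E →L[𝕜] E}

theorem one_add_smul_comp_inverse_comp_mul_one_sub (h : IsUnit T ↔ IsUnit (T + c • σ ∘L τ)) :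
    (1 + c • (τ ∘L Ring.inverse T ∘L σ)) *
      (1 - c • (τ ∘L Ring.inverse (T + c • σ ∘L τ) ∘L σ)) = 1 :=
  one_add_mul_one_sub_eq_one <| smul_comp_comp_sub_eq_mul τ σ c <| by
    simpa only [add_sub_cancel_left] using Ring.inverse_sub_inverse h

theorem one_sub_smul_comp_inverse_comp_mul_one_add (h : IsUnit T ↔ IsUnit (T + c • σ ∘L τ)) :
    (1 - c • (τ ∘L Ring.inverse (T + c • σ ∘L τ) ∘L σ)) *
      (1 + c • (τ ∘L Ring.inverse T ∘L σ)) = 1 :=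
  one_sub_mul_one_add_eq_one <| smul_comp_comp_sub_eq_mul τ σ c <| by
    simpa only [add_sub_cancel_left] using Ring.inverse_sub_inverse' h

end Sandwich

variable {𝕜 E ι : Type*} [RCLike 𝕜] [NormedAddCommGroup E] [InnerProductSpace 𝕜 E]
  [CompleteSpace E] [Fintype ι]

theorem adjoint_comp_apply_of_apply_eq_inner {u : ι → E} {τ : E →L[𝕜] EuclideanSpace 𝕜 ι}
    (hτ : ∀ v i, τ v i = inner 𝕜 (u i) v) (v : E) :
    (adjoint τ ∘L τ) v = ∑ i, inner 𝕜 (u i) v • u i := by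
  refine ext_inner_left 𝕜 fun w => ?_
  simp only [comp_apply, adjoint_inner_right, PiLp.inner_apply, hτ, RCLike.inner_apply,
    inner_sum, inner_smul_right, inner_conj_symm]

end ContinuousLinearMap

open ContinuousLinearMap

theorem tau_adjoint_and_B_invertible_general
    {H : Type*} [NormedAddCommGroup H] [InnerProductSpace ℂ H] [CompleteSpace H]
    (u₁ u₂ : H)
    (τ : H →L[ℂ] EuclideanSpace ℂ (Fin 2))
    (hτ : ∀ v : H, τ v = ![(inner ℂ u₁ v : ℂ), (inner ℂ u₂ v : ℂ)])
    (V : H →L[ℂ] H)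
    (hV : ∀ v : H, V v = (inner ℂ u₁ v : ℂ) • u₁ + (inner ℂ u₂ v : ℂ) • u₂)
    (H₀ : H →L[ℂ] H) (hH₀ : IsSelfAdjoint H₀)
    (α : ℝ) (z : ℂ) (hz : z.im ≠ 0) :
    (ContinuousLinearMap.adjoint τ) ∘L τ = V ∧
    (1 + (α : ℂ) • (τ ∘L Ring.inverse (H₀ - z • (1 : H →L[ℂ] H)) ∘L
          ContinuousLinearMap.adjoint τ)) *
        (1 - (α : ℂ) • (τ ∘L Ring.inverse (H₀ + (α : ℂ) • V - z • (1 : H →L[ℂ] H)) ∘L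
          ContinuousLinearMap.adjoint τ)) = 1 ∧
    (1 - (α : ℂ) • (τ ∘L Ring.inverse (H₀ + (α : ℂ) • V - z • (1 : H →L[ℂ] H)) ∘L
          ContinuousLinearMap.adjoint τ)) *
        (1 + (α : ℂ) • (τ ∘L Ring.inverse (H₀ - z • (1 : H →L[ℂ] H)) ∘L
          ContinuousLinearMap.adjoint τ)) = 1 := by
  have hτV : adjoint τ ∘L τ = V := by
    ext v
    have hτ' : ∀ v i, τ v i = inner ℂ (![u₁, u₂] i) v := fun v i => by
      rw [hτ]; fin_cases i <;> rfl
    simp [adjoint_comp_apply_of_apply_eq_inner hτ', hV]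
  have hVsa : IsSelfAdjoint V := by
    rw [← hτV, isSelfAdjoint_iff', adjoint_comp, adjoint_adjoint]
  have hpert : H₀ + (α : ℂ) • V - z • 1 = H₀ - z • 1 + (α : ℂ) • (adjoint τ ∘L τ) := by
    rw [hτV]; abel
  have hunits : IsUnit (H₀ - z • 1) ↔ IsUnit (H₀ - z • 1 + (α : ℂ) • (adjoint τ ∘L τ)) :=
    iff_of_true (hH₀.isUnit_sub_smul_one hz) <| hpert ▸
      (hH₀.add ((IsSelfAdjoint.all α).smul hVsa)).isUnit_sub_smul_one hz
  rw [hpert]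
  exact ⟨hτV, one_add_smul_comp_inverse_comp_mul_one_sub τ _ _ hunits,
    one_sub_smul_comp_inverse_comp_mul_one_add τ _ _ hunits⟩

/-- For the rank-two perturbation `V = τ*τ` built from orthogonal vectors `u₁ ⊥ u₂`,
one has `τ*τ = V`, and for non-real `z` the 2×2 matrix operator
`B(α,z) = I + α·τR₀(z)τ*` is invertible with inverse `I - α·τR_α(z)τ*`. -/
theorem tau_adjoint_and_B_invertible
    {H : Type*} [NormedAddCommGroup H] [InnerProductSpace ℂ H] [CompleteSpace H]
    (u₁ u₂ : H) (hu : (inner ℂ u₁ u₂ : ℂ) = 0)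
    (τ : H →L[ℂ] EuclideanSpace ℂ (Fin 2))
    (hτ : ∀ v : H, τ v = ![(inner ℂ u₁ v : ℂ), (inner ℂ u₂ v : ℂ)])
    (V : H →L[ℂ] H)
    (hV : ∀ v : H, V v = (inner ℂ u₁ v : ℂ) • u₁ + (inner ℂ u₂ v : ℂ) • u₂)
    (H₀ : H →L[ℂ] H) (hH₀ : IsSelfAdjoint H₀)
    (α : ℝ) (z : ℂ) (hz : z.im ≠ 0) :
    (ContinuousLinearMap.adjoint τ) ∘L τ = V ∧
    (1 + (α : ℂ) • (τ ∘L Ring.inverse (H₀ - z • (1 : H →L[ℂ] H)) ∘L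
          ContinuousLinearMap.adjoint τ)) *
        (1 - (α : ℂ) • (τ ∘L Ring.inverse (H₀ + (α : ℂ) • V - z • (1 : H →L[ℂ] H)) ∘L
          ContinuousLinearMap.adjoint τ)) = 1 ∧
    (1 - (α : ℂ) • (τ ∘L Ring.inverse (H₀ + (α : ℂ) • V - z • (1 : H →L[ℂ] H)) ∘L
          ContinuousLinearMap.adjoint τ)) *
        (1 + (α : ℂ) • (τ ∘L Ring.inverse (H₀ - z • (1 : H →L[ℂ] H)) ∘L
          ContinuousLinearMap.adjoint τ)) = 1 :=
  tau_adjoint_and_B_invertible_general u₁ u₂ τ hτ V hV H₀ hH₀ α z hz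
end
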